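/- Let β > 0, τ ≥ 0, λ > 0, and let (ζ₁, μ₁) be a principal eigenpair of the clamped operator β∂x⁴ − τ∂x² on (-1,1). Let γ > 0 satisfy γ² ≤ 1/(4μ₁). Then for every pair of continuous functions u⁰, u¹ : [-1,1] → ℝ there exists c₀ ≥ 0, depending only on γ, μ₁, ζ₁, u⁰ and u¹, with the following property: for any T ∈ (0,∞] and any u : [0,T) × [-1,1] → ℝ whose partial derivatives ∂t^j ∂x^k u for j ≤ 2, k ≤ 4 exist and are jointly continuous, with u(0,·) = u⁰, ∂t u(0,·) = u¹, u(t,±1) = ∂x u(t,±1) = 0, u(t,x) > -1 for all (t,x), and γ² ∂t² u + ∂t u + β ∂x⁴ u − τ ∂x² u = − λ G on [0,T) × (-1,1) for some continuous nonnegative G, one has ∫_{-1}^{1} ζ₁(x) |u(t,x)| dx ≤ c₀ for all t ∈ [0,T). -/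

import Mathlib

/-
Testing the equation against `ζ₁` and integrating by parts (both `ζ₁` and `u t` are clamped)
shows that `X t = ∫ ζ₁ u(t)` satisfies `γ² X'' + X' + μ₁ X = -λ ∫ ζ₁ G ≤ 0`. Under
`4 γ² μ₁ ≤ 1` the characteristic polynomial `γ² r² + r + μ₁` has real roots `p, q < 0`, so the
inequality factors as `(d/dt - p) (d/dt - q) X ≤ 0`, and two first-order comparison arguments
bound `X` from above in terms of `X 0` and `X' 0` only. Finally `u > -1` gives
`|u| ≤ u + 2`, which turns this one-sided bound into a bound on `∫ ζ₁ |u|`.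
-/

open MeasureTheory Set
open scoped ENNReal

/-- A principal eigenpair `(ζ, μ)` of the clamped operator `β ∂x⁴ - τ ∂x²` on `(-1,1)`:
`μ > 0` and `ζ` is a C⁴ function with clamped boundary conditions, positive on `(-1,1)`,
normalized in `L¹`, satisfying `β ζ'''' - τ ζ'' = μ ζ`. -/
def IsPrincipalEigenpair (β τ : ℝ) (ζ : ℝ → ℝ) (μ : ℝ) : Prop :=
  0 < μ ∧ ContDiff ℝ 4 ζ ∧
    ζ (-1) = 0 ∧ ζ 1 = 0 ∧ deriv ζ (-1) = 0 ∧ deriv ζ 1 = 0 ∧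
    (∀ x ∈ Ioo (-1 : ℝ) 1, 0 < ζ x) ∧
    (∫ x in (-1 : ℝ)..1, ζ x) = 1 ∧
    ∀ x ∈ Ioo (-1 : ℝ) 1,
      β * iteratedDeriv 4 ζ x - τ * iteratedDeriv 2 ζ x = μ * ζ x

open Real

def IsClamped (a b : ℝ) (f : ℝ → ℝ) : Prop :=
  f a = 0 ∧ f b = 0 ∧ deriv f a = 0 ∧ deriv f b = 0

theorem ContDiff.hasDerivAt_iteratedDeriv {f : ℝ → ℝ} {n : WithTop ℕ∞} (hf : ContDiff ℝ n f)
    (k : ℕ) (hk : (k : WithTop ℕ∞) < n) (x : ℝ) :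
    HasDerivAt (iteratedDeriv k f) (iteratedDeriv (k + 1) f x) x := by
  rw [iteratedDeriv_succ]
  exact (hf.differentiable_iteratedDeriv k hk x).hasDerivAt

theorem hasDerivAt_intervalIntegral_of_continuous {F F' : ℝ → ℝ → ℝ} {a b : ℝ}
    (hF : Continuous fun p : ℝ × ℝ => F p.1 p.2)
    (hF' : Continuous fun p : ℝ × ℝ => F' p.1 p.2)
    (hd : ∀ s x, HasDerivAt (fun s => F s x) (F' s x) s) (t : ℝ) :
    HasDerivAt (fun s => ∫ x in a..b, F s x) (∫ x in a..b, F' t x) t := by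
  have hsec : ∀ {H : ℝ → ℝ → ℝ}, (Continuous fun p : ℝ × ℝ => H p.1 p.2) → ∀ s,
      Continuous (H s) := fun hH s => hH.comp (continuous_const.prodMk continuous_id)
  obtain ⟨M, hM⟩ : ∃ M, ∀ p ∈ Icc (t - 1) (t + 1) ×ˢ uIcc a b, ‖F' p.1 p.2‖ ≤ M :=
    (isCompact_Icc.prod isCompact_uIcc).exists_bound_of_continuousOn hF'.continuousOn
  refine (intervalIntegral.hasDerivAt_integral_of_dominated_loc_of_deriv_le (bound := fun _ => M)
    (Metric.ball_mem_nhds t one_pos)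
    (.of_forall fun s => (hsec hF s).aestronglyMeasurable) ((hsec hF t).intervalIntegrable a b)
    (hsec hF' t).aestronglyMeasurable (.of_forall fun x hx s hs => hM (s, x) ⟨?_, ?_⟩)
    intervalIntegrable_const (.of_forall fun x _ s _ => hd s x)).2
  · exact Ioo_subset_Icc_self (Real.ball_eq_Ioo t 1 ▸ hs)
  · exact uIoc_subset_uIcc hx

theorem hasDerivAt_integral_mul_iteratedDeriv {ζ : ℝ → ℝ} {w : ℝ → ℝ → ℝ} {n : WithTop ℕ∞}
    {j : ℕ} (hζ : Continuous ζ) (hw : ∀ x, ContDiff ℝ n fun s => w s x)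
    (hj : (j : WithTop ℕ∞) < n)
    (hc : Continuous fun p : ℝ × ℝ => iteratedDeriv j (fun s => w s p.2) p.1)
    (hc' : Continuous fun p : ℝ × ℝ => iteratedDeriv (j + 1) (fun s => w s p.2) p.1)
    (a b t : ℝ) :
    HasDerivAt (fun s => ∫ x in a..b, ζ x * iteratedDeriv j (fun s => w s x) s)
      (∫ x in a..b, ζ x * iteratedDeriv (j + 1) (fun s => w s x) t) t :=
  hasDerivAt_intervalIntegral_of_continuous ((hζ.comp continuous_snd).mul hc)
    ((hζ.comp continuous_snd).mul hc')
    (fun s x => ((hw x).hasDerivAt_iteratedDeriv j hj s).const_mul (ζ x)) t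

theorem integral_iteratedDeriv_mul_iteratedDeriv_succ {f g : ℝ → ℝ} {n : WithTop ℕ∞} {i j : ℕ}
    {a b : ℝ} (hf : ContDiff ℝ n f) (hg : ContDiff ℝ n g) (hi : (i : WithTop ℕ∞) < n)
    (hj : (j : WithTop ℕ∞) < n) (ha : iteratedDeriv i f a * iteratedDeriv j g a = 0)
    (hb : iteratedDeriv i f b * iteratedDeriv j g b = 0) :
    ∫ x in a..b, iteratedDeriv i f x * iteratedDeriv (j + 1) g x
      = -∫ x in a..b, iteratedDeriv (i + 1) f x * iteratedDeriv j g x := by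
  have hcont : ∀ {h : ℝ → ℝ} {k : ℕ}, ContDiff ℝ n h → (k : WithTop ℕ∞) < n →
      Continuous (iteratedDeriv (k + 1) h) := fun hh hk =>
    hh.continuous_iteratedDeriv _ (by exact_mod_cast ENat.add_one_natCast_le_withTop_of_lt hk)
  rw [intervalIntegral.integral_mul_deriv_eq_deriv_mul
    (fun x _ => hf.hasDerivAt_iteratedDeriv i hi x) (fun x _ => hg.hasDerivAt_iteratedDeriv j hj x)
    ((hcont hf hi).intervalIntegrable a b) ((hcont hg hj).intervalIntegrable a b),
    ha, hb, sub_zero, zero_sub]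

theorem integral_mul_iteratedDeriv_two_eq {f g : ℝ → ℝ} {a b : ℝ} (hf : ContDiff ℝ 2 f)
    (hg : ContDiff ℝ 2 g) (hfa : f a = 0) (hfb : f b = 0) (hga : g a = 0) (hgb : g b = 0) :
    ∫ x in a..b, f x * iteratedDeriv 2 g x = ∫ x in a..b, iteratedDeriv 2 f x * g x := by
  have h₁ := integral_iteratedDeriv_mul_iteratedDeriv_succ (i := 0) (j := 1) (a := a) (b := b)
    hf hg (by norm_num) (by norm_num) (by simp [hfa]) (by simp [hfb])
  have h₂ := integral_iteratedDeriv_mul_iteratedDeriv_succ (i := 1) (j := 0) (a := a) (b := b)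
    hf hg (by norm_num) (by norm_num) (by simp [hga]) (by simp [hgb])
  simp only [iteratedDeriv_zero] at h₁ h₂
  rw [h₁, h₂, neg_neg]

theorem integral_mul_iteratedDeriv_four_eq {f g : ℝ → ℝ} {a b : ℝ} (hf : ContDiff ℝ 4 f)
    (hg : ContDiff ℝ 4 g) (hfc : IsClamped a b f) (hgc : IsClamped a b g) :
    ∫ x in a..b, f x * iteratedDeriv 4 g x = ∫ x in a..b, iteratedDeriv 4 f x * g x := by
  obtain ⟨hfa, hfb, hfa', hfb'⟩ := hfc
  obtain ⟨hga, hgb, hga', hgb'⟩ := hgc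
  have h₁ := integral_iteratedDeriv_mul_iteratedDeriv_succ (i := 0) (j := 3) (a := a) (b := b)
    hf hg (by norm_num) (by norm_num) (by simp [hfa]) (by simp [hfb])
  have h₂ := integral_iteratedDeriv_mul_iteratedDeriv_succ (i := 1) (j := 2) (a := a) (b := b)
    hf hg (by norm_num) (by norm_num) (by simp [hfa']) (by simp [hfb'])
  have h₃ := integral_iteratedDeriv_mul_iteratedDeriv_succ (i := 2) (j := 1) (a := a) (b := b)
    hf hg (by norm_num) (by norm_num) (by simp [hga']) (by simp [hgb'])
  have h₄ := integral_iteratedDeriv_mul_iteratedDeriv_succ (i := 3) (j := 0) (a := a) (b := b)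
    hf hg (by norm_num) (by norm_num) (by simp [hga]) (by simp [hgb])
  simp only [iteratedDeriv_zero] at h₁ h₄
  rw [h₁, h₂, h₃, h₄, neg_neg, neg_neg]

namespace IsPrincipalEigenpair

variable {β τ μ : ℝ} {ζ : ℝ → ℝ}

theorem continuous (hζ : IsPrincipalEigenpair β τ ζ μ) : Continuous ζ :=
  hζ.2.1.continuous

theorem isClamped (hζ : IsPrincipalEigenpair β τ ζ μ) : IsClamped (-1) 1 ζ :=
  ⟨hζ.2.2.1, hζ.2.2.2.1, hζ.2.2.2.2.1, hζ.2.2.2.2.2.1⟩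

theorem pos (hζ : IsPrincipalEigenpair β τ ζ μ) : ∀ x ∈ Ioo (-1 : ℝ) 1, 0 < ζ x :=
  hζ.2.2.2.2.2.2.1

theorem integral_eq_one (hζ : IsPrincipalEigenpair β τ ζ μ) : ∫ x in (-1 : ℝ)..1, ζ x = 1 :=
  hζ.2.2.2.2.2.2.2.1

theorem integral_mul_eq {v : ℝ → ℝ} (hζ : IsPrincipalEigenpair β τ ζ μ) (hv : ContDiff ℝ 4 v)
    (hvc : IsClamped (-1) 1 v) :
    ∫ x in (-1 : ℝ)..1, ζ x * (β * iteratedDeriv 4 v x - τ * iteratedDeriv 2 v x)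
      = μ * ∫ x in (-1 : ℝ)..1, ζ x * v x := by
  have hζc := hζ.isClamped
  obtain ⟨-, hζ4, -, -, -, -, -, -, heq⟩ := hζ
  have : Continuous (iteratedDeriv 4 v) := hv.continuous_iteratedDeriv 4 le_rfl
  have : Continuous (iteratedDeriv 2 v) := hv.continuous_iteratedDeriv 2 (by norm_num)
  have : Continuous (iteratedDeriv 4 ζ) := hζ4.continuous_iteratedDeriv 4 le_rfl
  have : Continuous (iteratedDeriv 2 ζ) := hζ4.continuous_iteratedDeriv 2 (by norm_num)
  have : Continuous ζ := hζ4.continuous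
  have : Continuous v := hv.continuous
  calc ∫ x in (-1 : ℝ)..1, ζ x * (β * iteratedDeriv 4 v x - τ * iteratedDeriv 2 v x)
      = β * (∫ x in (-1 : ℝ)..1, ζ x * iteratedDeriv 4 v x)
          - τ * ∫ x in (-1 : ℝ)..1, ζ x * iteratedDeriv 2 v x := by
        rw [← intervalIntegral.integral_const_mul, ← intervalIntegral.integral_const_mul,
          ← intervalIntegral.integral_sub]
        · simp only [mul_sub, mul_left_comm]
        all_goals exact Continuous.intervalIntegrable (by fun_prop) _ _
    _ = β * (∫ x in (-1 : ℝ)..1, iteratedDeriv 4 ζ x * v x)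
          - τ * ∫ x in (-1 : ℝ)..1, iteratedDeriv 2 ζ x * v x := by
        rw [integral_mul_iteratedDeriv_four_eq hζ4 hv hζc hvc,
          integral_mul_iteratedDeriv_two_eq (hζ4.of_le (by norm_num)) (hv.of_le (by norm_num))
            hζc.1 hζc.2.1 hvc.1 hvc.2.1]
    _ = ∫ x in (-1 : ℝ)..1, (β * iteratedDeriv 4 ζ x - τ * iteratedDeriv 2 ζ x) * v x := by
        rw [← intervalIntegral.integral_const_mul, ← intervalIntegral.integral_const_mul,
          ← intervalIntegral.integral_sub]
        · simp only [sub_mul, mul_assoc]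
        all_goals exact Continuous.intervalIntegrable (by fun_prop) _ _
    _ = ∫ x in (-1 : ℝ)..1, μ * (ζ x * v x) :=
        intervalIntegral.integral_congr_Ioo_of_le (by norm_num) fun x hx => by
          simp only [heq x hx, mul_assoc]
    _ = μ * ∫ x in (-1 : ℝ)..1, ζ x * v x :=
        intervalIntegral.integral_const_mul _ _

theorem add_integral_mul_nonpos {c : ℝ} {v v₁ v₂ : ℝ → ℝ} (hζ : IsPrincipalEigenpair β τ ζ μ)
    (hv : ContDiff ℝ 4 v) (hvc : IsClamped (-1) 1 v) (hv₁ : Continuous v₁)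
    (hv₂ : Continuous v₂)
    (h : ∀ x ∈ Ioo (-1 : ℝ) 1,
      c * v₂ x + v₁ x + (β * iteratedDeriv 4 v x - τ * iteratedDeriv 2 v x) ≤ 0) :
    c * (∫ x in (-1 : ℝ)..1, ζ x * v₂ x) + (∫ x in (-1 : ℝ)..1, ζ x * v₁ x)
      + μ * (∫ x in (-1 : ℝ)..1, ζ x * v x) ≤ 0 := by
  have : Continuous (iteratedDeriv 4 v) := hv.continuous_iteratedDeriv 4 le_rfl
  have : Continuous (iteratedDeriv 2 v) := hv.continuous_iteratedDeriv 2 (by norm_num)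
  have : Continuous ζ := hζ.continuous
  calc c * (∫ x in (-1 : ℝ)..1, ζ x * v₂ x) + (∫ x in (-1 : ℝ)..1, ζ x * v₁ x)
        + μ * (∫ x in (-1 : ℝ)..1, ζ x * v x)
      = ∫ x in (-1 : ℝ)..1,
          ζ x * (c * v₂ x + v₁ x + (β * iteratedDeriv 4 v x - τ * iteratedDeriv 2 v x)) := by
        rw [← hζ.integral_mul_eq hv hvc, ← intervalIntegral.integral_const_mul,
          ← intervalIntegral.integral_add, ← intervalIntegral.integral_add]
        · simp only [mul_add, mul_left_comm]
        all_goals exact Continuous.intervalIntegrable (by fun_prop) _ _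
    _ ≤ ∫ _ in (-1 : ℝ)..1, (0 : ℝ) :=
        intervalIntegral.integral_mono_on_of_le_Ioo (by norm_num)
          (Continuous.intervalIntegrable (by fun_prop) _ _) intervalIntegrable_const
          fun x hx => mul_nonpos_of_nonneg_of_nonpos (hζ.pos x hx).le (h x hx)
    _ = 0 := intervalIntegral.integral_zero

end IsPrincipalEigenpair

theorem le_max_of_hasDerivAt_le_mul {f f' : ℝ → ℝ} {r a t : ℝ} (hr : r ≤ 0) (hat : a ≤ t)
    (hf : ∀ s ∈ Icc a t, HasDerivAt f (f' s) s) (hle : ∀ s ∈ Icc a t, f' s ≤ r * f s) :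
    f t ≤ max (f a) 0 := by
  have hexp : f t ≤ f a * exp (r * (t - a)) := by
    have h := le_gronwallBound_of_liminf_deriv_right_le
      (fun s hs => (hf s hs).continuousAt.continuousWithinAt)
      (fun s hs _ hr' => (hf s (Ico_subset_Icc_self hs)).hasDerivWithinAt.liminf_right_slope_le
        hr')
      le_rfl (fun s hs => (hle s (Ico_subset_Icc_self hs)).trans (add_zero _).ge) t ⟨hat, le_rfl⟩
    rwa [gronwallBound_ε0] at h
  rcases le_total (f a) 0 with ha | ha
  · exact hexp.trans ((mul_nonpos_of_nonpos_of_nonneg ha (exp_pos _).le).trans (le_max_right _ _))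
  · exact hexp.trans ((mul_le_of_le_one_right ha (exp_le_one_iff.2
      (mul_nonpos_of_nonpos_of_nonneg hr (sub_nonneg.2 hat)))).trans (le_max_left _ _))

theorem exists_neg_roots_of_four_mul_le_one {a μ : ℝ} (ha : 0 < a) (hμ : 0 < μ)
    (h : 4 * a * μ ≤ 1) : ∃ p q : ℝ, p < 0 ∧ q < 0 ∧ a * (p + q) = -1 ∧ a * (p * q) = μ := by
  set d := √(1 - 4 * a * μ)
  have hd0 : 0 ≤ d := sqrt_nonneg _
  have hdd : d * d = 1 - 4 * a * μ := mul_self_sqrt (by linarith)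
  have hd1 : d < 1 := by nlinarith [mul_pos ha hμ]
  refine ⟨(-1 - d) / (2 * a), (-1 + d) / (2 * a), div_neg_of_neg_of_pos (by linarith)
    (by positivity), div_neg_of_neg_of_pos (by linarith) (by positivity), ?_, ?_⟩
  · field_simp
    ring
  · rw [div_mul_div_comm, show (-1 - d) * (-1 + d) = 1 - d * d by ring, hdd]
    field_simp
    ring

theorem le_of_damped_le_zero {a μ p q t : ℝ} {X X' X'' : ℝ → ℝ} (ha : 0 < a) (hp : p ≤ 0)
    (hq : q < 0) (hsum : a * (p + q) = -1) (hprod : a * (p * q) = μ) (ht : 0 ≤ t)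
    (hX : ∀ s ∈ Icc 0 t, HasDerivAt X (X' s) s) (hX' : ∀ s ∈ Icc 0 t, HasDerivAt X' (X'' s) s)
    (h : ∀ s ∈ Icc 0 t, a * X'' s + X' s + μ * X s ≤ 0) :
    X t ≤ |X 0| + max (X' 0 - q * X 0) 0 / -q := by
  set M := max (X' 0 - q * X 0) 0
  -- `a X'' + X' + μ X = a (Z' - p Z)` for `Z = X' - q X`
  have hZ : ∀ s ∈ Icc 0 t, X' s - q * X s ≤ M := fun s hs =>
    le_max_of_hasDerivAt_le_mul (f := fun s => X' s - q * X s) hp hs.1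
      (fun r hr => (hX' r ⟨hr.1, hr.2.trans hs.2⟩).sub ((hX r ⟨hr.1, hr.2.trans hs.2⟩).const_mul q))
      fun r hr => by
        have hfac : a * (X'' r - q * X' r - p * (X' r - q * X r)) ≤ 0 := by
          linear_combination h r ⟨hr.1, hr.2.trans hs.2⟩ - X' r * hsum + X r * hprod
        linarith [nonpos_of_mul_nonpos_right hfac ha]
  have hqM : q * (M / -q) = -M := by field_simp [hq.ne]
  have hXt := le_max_of_hasDerivAt_le_mul (f := fun s => X s - M / -q) hq.le ht
    (fun s hs => (hX s hs).sub_const _) fun s hs => by linarith [hZ s hs]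
  have hM : 0 ≤ M / -q := div_nonneg (le_max_right _ _) (by linarith)
  have h0 : max (X 0 - M / -q) 0 ≤ |X 0| :=
    max_le (by linarith [le_abs_self (X 0)]) (abs_nonneg _)
  linarith

theorem integral_mul_abs_le {ζ v : ℝ → ℝ} {a b : ℝ} (hab : a ≤ b) (hζ : Continuous ζ)
    (hv : Continuous v) (hζ0 : ∀ x ∈ Ioo a b, 0 ≤ ζ x) (hv1 : ∀ x ∈ Ioo a b, -1 ≤ v x) :
    ∫ x in a..b, ζ x * |v x| ≤ (∫ x in a..b, ζ x * v x) + 2 * ∫ x in a..b, ζ x := by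
  rw [← intervalIntegral.integral_const_mul, ← intervalIntegral.integral_add
    (Continuous.intervalIntegrable (by fun_prop) _ _)
    (Continuous.intervalIntegrable (by fun_prop) _ _)]
  refine intervalIntegral.integral_mono_on_of_le_Ioo hab
    (Continuous.intervalIntegrable (by fun_prop) _ _)
    (Continuous.intervalIntegrable (by fun_prop) _ _) fun x hx => ?_
  have habs : |v x| ≤ v x + 2 := abs_le.2 ⟨by linarith [hv1 x hx], by linarith⟩
  nlinarith [mul_le_mul_of_nonneg_left habs (hζ0 x hx)]

theorem stmt_3_general
    (γ μ₁ : ℝ) (ζ₁ : ℝ → ℝ) (u₀ u₁ : ℝ → ℝ)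
    (hγ : 0 < γ) (hμ₁ : 0 < μ₁) (hγμ : γ ^ 2 ≤ 1 / (4 * μ₁)) :
    ∃ c₀ : ℝ, 0 ≤ c₀ ∧
      ∀ β τ lam : ℝ, 0 < β → 0 ≤ τ → 0 < lam →
        IsPrincipalEigenpair β τ ζ₁ μ₁ →
        ∀ (T : ℝ≥0∞), 0 < T →
        ∀ u G : ℝ → ℝ → ℝ,
          -- existence of ∂x^k u, k ≤ 4, and of ∂t^j ∂x^k u, j ≤ 2
          (∀ t : ℝ, ContDiff ℝ 4 (u t)) →
          (∀ k ≤ 4, ∀ x : ℝ, ContDiff ℝ 2 fun s => iteratedDeriv k (u s) x) →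
          -- joint continuity of ∂t^j ∂x^k u, j ≤ 2, k ≤ 4
          (∀ j ≤ 2, ∀ k ≤ 4, Continuous fun p : ℝ × ℝ =>
            iteratedDeriv j (fun s => iteratedDeriv k (u s) p.2) p.1) →
          -- initial conditions
          (∀ x ∈ Icc (-1 : ℝ) 1, u 0 x = u₀ x) →
          (∀ x ∈ Icc (-1 : ℝ) 1, deriv (fun s => u s x) 0 = u₁ x) →
          -- clamped boundary conditions
          (∀ t : ℝ, 0 ≤ t → ENNReal.ofReal t < T →
            u t (-1) = 0 ∧ u t 1 = 0 ∧ deriv (u t) (-1) = 0 ∧ deriv (u t) 1 = 0) →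
          -- u stays above -1
          (∀ t : ℝ, 0 ≤ t → ENNReal.ofReal t < T → ∀ x ∈ Icc (-1 : ℝ) 1, -1 < u t x) →
          -- G continuous and nonnegative
          (Continuous fun p : ℝ × ℝ => G p.1 p.2) →
          (∀ t : ℝ, 0 ≤ t → ENNReal.ofReal t < T → ∀ x ∈ Ioo (-1 : ℝ) 1, 0 ≤ G t x) →
          -- the evolution equation γ² ∂t² u + ∂t u + β ∂x⁴ u - τ ∂x² u = -λ G
          (∀ t : ℝ, 0 ≤ t → ENNReal.ofReal t < T → ∀ x ∈ Ioo (-1 : ℝ) 1,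
            γ ^ 2 * iteratedDeriv 2 (fun s => u s x) t + deriv (fun s => u s x) t
              + β * iteratedDeriv 4 (u t) x - τ * iteratedDeriv 2 (u t) x
              = - lam * G t x) →
          ∀ t : ℝ, 0 ≤ t → ENNReal.ofReal t < T →
            (∫ x in (-1 : ℝ)..1, ζ₁ x * |u t x|) ≤ c₀ := by
  obtain ⟨p, q, hp, hq, hsum, hprod⟩ := exists_neg_roots_of_four_mul_le_one (pow_pos hγ 2) hμ₁
    (by rw [le_div_iff₀ (by positivity)] at hγμ; linarith)
  set A := ∫ x in (-1 : ℝ)..1, ζ₁ x * u₀ x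
  set B := ∫ x in (-1 : ℝ)..1, ζ₁ x * u₁ x
  refine ⟨|A| + max (B - q * A) 0 / -q + 2, ?_, ?_⟩
  · have := div_nonneg (le_max_right (B - q * A) 0) (neg_nonneg.2 hq.le)
    positivity
  intro β τ lam _ _ hlam hζ₁ T _ u G hu hut hjoint hu0 hu1 hbc hlow _ hG hpde t ht htT
  have hw : ∀ x, ContDiff ℝ 2 fun s => u s x := by simpa using hut 0 (by norm_num)
  have hwc : ∀ j ≤ 2, Continuous fun p : ℝ × ℝ => iteratedDeriv j (fun s => u s p.2) p.1 :=
    fun j hj => by simpa using hjoint j hj 0 (by norm_num)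
  have hwc' : ∀ j ≤ 2, ∀ s, Continuous fun x => iteratedDeriv j (fun s => u s x) s :=
    fun j hj s => (hwc j hj).comp (continuous_const.prodMk continuous_id)
  set X : ℕ → ℝ → ℝ := fun j s => ∫ x in (-1 : ℝ)..1, ζ₁ x * iteratedDeriv j (fun s => u s x) s
  have hX : ∀ j < 2, ∀ s, HasDerivAt (X j) (X (j + 1) s) s := fun j hj s =>
    hasDerivAt_integral_mul_iteratedDeriv hζ₁.continuous hw (by exact_mod_cast hj)
      (hwc j hj.le) (hwc (j + 1) hj) _ _ s
  have hode : ∀ s ∈ Icc 0 t, γ ^ 2 * X 2 s + X 1 s + μ₁ * X 0 s ≤ 0 := by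
    intro s hs
    have hsT : ENNReal.ofReal s < T := (ENNReal.ofReal_le_ofReal hs.2).trans_lt htT
    simpa only [X, iteratedDeriv_zero] using hζ₁.add_integral_mul_nonpos (hu s)
      (hbc s hs.1 hsT) (hwc' 1 (by norm_num) s) (hwc' 2 le_rfl s) fun x hx => by
        rw [iteratedDeriv_one]
        nlinarith [hpde s hs.1 hsT x hx, mul_nonneg hlam.le (hG s hs.1 hsT x hx)]
  have hXA : X 0 0 = A := intervalIntegral.integral_congr fun x hx => by
    simp [hu0 x (uIcc_of_le (by norm_num : (-1 : ℝ) ≤ 1) ▸ hx)]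
  have hXB : X 1 0 = B := intervalIntegral.integral_congr fun x hx => by
    simp [hu1 x (uIcc_of_le (by norm_num : (-1 : ℝ) ≤ 1) ▸ hx)]
  calc ∫ x in (-1 : ℝ)..1, ζ₁ x * |u t x|
      ≤ X 0 t + 2 * 1 := by
        simpa only [X, iteratedDeriv_zero, hζ₁.integral_eq_one] using
          integral_mul_abs_le (by norm_num) hζ₁.continuous (hu t).continuous
            (fun x hx => (hζ₁.pos x hx).le)
            fun x hx => (hlow t ht htT x (Ioo_subset_Icc_self hx)).le
    _ ≤ |A| + max (B - q * A) 0 / -q + 2 := by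
      have := le_of_damped_le_zero (pow_pos hγ 2) hp.le hq hsum hprod ht
        (fun s _ => hX 0 (by norm_num) s) (fun s _ => hX 1 (by norm_num) s) hode
      rw [hXA, hXB] at this
      linarith

/-- Weighted L¹ bound for the hyperbolic (γ > 0) clamped problem with
nonpositive right-hand side `-λ G`, under the smallness condition `γ² ≤ 1/(4μ₁)`;
the bound `c₀` depends only on `γ`, `μ₁`, `ζ₁`, `u⁰` and `u¹`. -/
theorem stmt_3
    (γ μ₁ : ℝ) (ζ₁ : ℝ → ℝ) (u₀ u₁ : ℝ → ℝ)
    (hγ : 0 < γ) (hμ₁ : 0 < μ₁) (hγμ : γ ^ 2 ≤ 1 / (4 * μ₁))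
    (hu₀ : ContinuousOn u₀ (Icc (-1 : ℝ) 1))
    (hu₁ : ContinuousOn u₁ (Icc (-1 : ℝ) 1)) :
    ∃ c₀ : ℝ, 0 ≤ c₀ ∧
      ∀ β τ lam : ℝ, 0 < β → 0 ≤ τ → 0 < lam →
        IsPrincipalEigenpair β τ ζ₁ μ₁ →
        ∀ (T : ℝ≥0∞), 0 < T →
        ∀ u G : ℝ → ℝ → ℝ,
          -- existence of ∂x^k u, k ≤ 4, and of ∂t^j ∂x^k u, j ≤ 2
          (∀ t : ℝ, ContDiff ℝ 4 (u t)) →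
          (∀ k ≤ 4, ∀ x : ℝ, ContDiff ℝ 2 fun s => iteratedDeriv k (u s) x) →
          -- joint continuity of ∂t^j ∂x^k u, j ≤ 2, k ≤ 4
          (∀ j ≤ 2, ∀ k ≤ 4, Continuous fun p : ℝ × ℝ =>
            iteratedDeriv j (fun s => iteratedDeriv k (u s) p.2) p.1) →
          -- initial conditions
          (∀ x ∈ Icc (-1 : ℝ) 1, u 0 x = u₀ x) →
          (∀ x ∈ Icc (-1 : ℝ) 1, deriv (fun s => u s x) 0 = u₁ x) →
          -- clamped boundary conditions
          (∀ t : ℝ, 0 ≤ t → ENNReal.ofReal t < T →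
            u t (-1) = 0 ∧ u t 1 = 0 ∧ deriv (u t) (-1) = 0 ∧ deriv (u t) 1 = 0) →
          -- u stays above -1
          (∀ t : ℝ, 0 ≤ t → ENNReal.ofReal t < T → ∀ x ∈ Icc (-1 : ℝ) 1, -1 < u t x) →
          -- G continuous and nonnegative
          (Continuous fun p : ℝ × ℝ => G p.1 p.2) →
          (∀ t : ℝ, 0 ≤ t → ENNReal.ofReal t < T → ∀ x ∈ Ioo (-1 : ℝ) 1, 0 ≤ G t x) →
          -- the evolution equation γ² ∂t² u + ∂t u + β ∂x⁴ u - τ ∂x² u = -λ G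
          (∀ t : ℝ, 0 ≤ t → ENNReal.ofReal t < T → ∀ x ∈ Ioo (-1 : ℝ) 1,
            γ ^ 2 * iteratedDeriv 2 (fun s => u s x) t + deriv (fun s => u s x) t
              + β * iteratedDeriv 4 (u t) x - τ * iteratedDeriv 2 (u t) x
              = - lam * G t x) →
          ∀ t : ℝ, 0 ≤ t → ENNReal.ofReal t < T →
            (∫ x in (-1 : ℝ)..1, ζ₁ x * |u t x|) ≤ c₀ :=
  stmt_3_general γ μ₁ ζ₁ u₀ u₁ hγ hμ₁ hγμ
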